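/- Let p and q be probability distributions on k elements with non-increasingly ordered entries such that p does not majorize q, and set δ* = 2 max_{l ∈ {1,…,k}} Σ_{i=1}^l (q_i − p_i). Then p majorizes the flattest δ*-approximation of q, i.e. p ≻ q̲^(δ*), and for every δ with 0 ≤ δ < δ* one has that p does not majorize q̲^(δ); that is, δ* is the minimal δ such that p ≻ q̲^(δ). -/

import Mathlib

open Finset

noncomputable section

/-- The ℓ¹ distance `‖a − b‖ = Σᵢ |aᵢ − bᵢ|` between two vectors in `ℝ^k`. -/
def l1dist {k : ℕ} (a b : Fin k → ℝ) : ℝ := ∑ i, |a i - b i|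

/-- A probability distribution on `k` elements: nonnegative entries summing to 1. -/
def IsProbDist {k : ℕ} (p : Fin k → ℝ) : Prop := (∀ i, 0 ≤ p i) ∧ ∑ i, p i = 1

/-- The vector `a` rearranged in non-increasing order, `a↓`. -/
def descSort {k : ℕ} (a : Fin k → ℝ) : Fin k → ℝ := fun i => a (Tuple.sort a i.rev)

/-- The sum of the first `l` entries of `a` (1-based indexing: entries `1,…,l`). -/
def psum {k : ℕ} (a : Fin k → ℝ) (l : ℕ) : ℝ :=
  ∑ i ∈ univ.filter (fun i : Fin k => (i : ℕ) < l), a i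

/-- The sum of the entries of `a` from position `l` to `k` (1-based indexing). -/
def tailSum {k : ℕ} (a : Fin k → ℝ) (l : ℕ) : ℝ :=
  ∑ i ∈ univ.filter (fun i : Fin k => l ≤ (i : ℕ) + 1), a i

/-- `a` majorizes `b` (`a ≻ b`): the total sums agree and all partial sums of the
non-increasing rearrangements satisfy `Σ_{i=1}^l a↓ᵢ ≥ Σ_{i=1}^l b↓ᵢ` for `l = 1,…,k`. -/
def Majorizes {k : ℕ} (a b : Fin k → ℝ) : Prop :=
  (∑ i, a i = ∑ i, b i) ∧
  ∀ l : ℕ, 1 ≤ l → l ≤ k → psum (descSort b) l ≤ psum (descSort a) l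

/-- The distribution `e₁ = (1,0,…,0)`. -/
def e1 (k : ℕ) : Fin k → ℝ := fun i => if (i : ℕ) = 0 then 1 else 0

/-- The uniform distribution `η = (1/k,…,1/k)`. -/
def unif (k : ℕ) : Fin k → ℝ := fun _ => (k : ℝ)⁻¹

/-- The unnormalised vector `r` in the construction of the steepest approximation:
`r₁ = p₁ + δ/2`, `rᵢ = pᵢ` otherwise. -/
def steepR {k : ℕ} (δ : ℝ) (p : Fin k → ℝ) : Fin k → ℝ :=
  fun i => if (i : ℕ) = 0 then p i + δ / 2 else p i

/-- `lstar ∈ {1,…,k}` is the truncation index of the steepest `δ`-approximation of `p`: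
`Σ_{i=1}^{l*} rᵢ ≤ 1 < Σ_{i=1}^{l*+1} rᵢ` (the second sum being meaningful for `l* < k`). -/
def IsTruncIdx {k : ℕ} (δ : ℝ) (p : Fin k → ℝ) (lstar : ℕ) : Prop :=
  1 ≤ lstar ∧ lstar ≤ k ∧ psum (steepR δ p) lstar ≤ 1 ∧
    (lstar < k → 1 < psum (steepR δ p) (lstar + 1))

/-- `pbar` is the steepest `δ`-approximation `p̄^(δ)` of `p` (assumed non-increasingly
ordered): if `‖p − e₁‖ ≤ δ` then `pbar = e₁`; otherwise `pbar` agrees with `r` on the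
first `l*` entries, has `1 − Σ_{i=1}^{l*} rᵢ` at position `l*+1`, and `0` afterwards. -/
def IsSteepest {k : ℕ} (δ : ℝ) (p pbar : Fin k → ℝ) : Prop :=
  (l1dist p (e1 k) ≤ δ ∧ pbar = e1 k) ∨
  (δ < l1dist p (e1 k) ∧ ∃ lstar : ℕ, IsTruncIdx δ p lstar ∧
    ∀ i : Fin k, pbar i =
      if (i : ℕ) < lstar then steepR δ p i
      else if (i : ℕ) = lstar then 1 - psum (steepR δ p) lstar
      else 0)

/-- `ε(x) = Σ_{i : pᵢ ≥ x} (pᵢ − x)`. -/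
def epsFn {k : ℕ} (p : Fin k → ℝ) (x : ℝ) : ℝ :=
  ∑ i ∈ univ.filter (fun i : Fin k => x ≤ p i), (p i - x)

/-- `γ(y) = Σ_{i : pᵢ ≤ y} (y − pᵢ)`. -/
def gammaFn {k : ℕ} (p : Fin k → ℝ) (y : ℝ) : ℝ :=
  ∑ i ∈ univ.filter (fun i : Fin k => p i ≤ y), (y - p i)

/-- `pflat` is the flattest `δ`-approximation of `p` built from the cutting level `x*` and
the filling level `y*`: `x*, y* ∈ [0,1]`, `ε(x*) = γ(y*) = δ/2`, and `pflat` equals `x*`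
where `pᵢ ≥ x*`, equals `y*` where `pᵢ ≤ y*`, and equals `pᵢ` otherwise. -/
def IsFlattestWith {k : ℕ} (δ : ℝ) (p pflat : Fin k → ℝ) (x y : ℝ) : Prop :=
  x ∈ Set.Icc (0 : ℝ) 1 ∧ y ∈ Set.Icc (0 : ℝ) 1 ∧
  epsFn p x = δ / 2 ∧ gammaFn p y = δ / 2 ∧
  ∀ i : Fin k, pflat i = if x ≤ p i then x else if p i ≤ y then y else p i

/-- `pflat` is the flattest `δ`-approximation `p̲^(δ)` of `p` (assumed non-increasingly
ordered): if `‖p − η‖ ≤ δ` then `pflat = η`; otherwise it is obtained by cutting at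
level `x*` and filling at level `y*`. -/
def IsFlattest {k : ℕ} (δ : ℝ) (p pflat : Fin k → ℝ) : Prop :=
  (l1dist p (unif k) ≤ δ ∧ pflat = unif k) ∨
  (δ < l1dist p (unif k) ∧ ∃ x y : ℝ, IsFlattestWith δ p pflat x y)

end

/-!
Write `q̲` for the flattest `δ*`-approximation. When `q̲ ≠ η`, it equals the cutting level
`x*` on an initial block of indices, `q` on a middle block and the filling level `y*` on a
final block. On the middle block its prefix sums are those of `q` minus `ε(x*) = δ*/2`,
hence at most those of `p` by the choice of `δ*`. On the outer blocks `q̲` is constant, so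
the prefix sums of `p - q̲` are concave there; they are nonnegative at the block ends,
hence throughout. Conversely `q̲^(δ) ≥ min(q, x*)` entrywise, so its prefix sums are at
least those of `q` minus `δ/2`, which at an `l` attaining `δ*` exceeds the prefix sum of
`p` as soon as `δ < δ*`.
-/

section PartialSums

variable {k : ℕ}

lemma psum_zero (f : Fin k → ℝ) : psum f 0 = 0 := by simp [psum]

lemma psum_self (f : Fin k → ℝ) : psum f k = ∑ i, f i := by
  simp [psum]

lemma psum_succ (f : Fin k → ℝ) {l : ℕ} (hl : l < k) :
    psum f (l + 1) = psum f l + f ⟨l, hl⟩ := by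
  have hset : univ.filter (fun i : Fin k => (i : ℕ) < l + 1)
      = insert ⟨l, hl⟩ (univ.filter fun i : Fin k => (i : ℕ) < l) := by
    ext i
    simp only [mem_filter, mem_univ, true_and, mem_insert, Fin.ext_iff]
    omega
  rw [psum, hset, sum_insert (by simp), add_comm, psum]

lemma psum_sub (f g : Fin k → ℝ) (l : ℕ) :
    psum (fun i => f i - g i) l = psum f l - psum g l :=
  sum_sub_distrib _ _

lemma psum_add (f g : Fin k → ℝ) (l : ℕ) :
    psum (fun i => f i + g i) l = psum f l + psum g l :=
  sum_add_distrib

lemma psum_le_psum {f g : Fin k → ℝ} (h : ∀ i, f i ≤ g i) (l : ℕ) : psum f l ≤ psum g l :=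
  sum_le_sum fun i _ => h i

lemma psum_sub_psum_le {u : Fin k → ℝ} {a m : ℕ} {v : ℝ} (ham : a ≤ m) (hm : m ≤ k)
    (h : ∀ i : Fin k, a ≤ (i : ℕ) → (i : ℕ) < m → u i ≤ v) :
    psum u m - psum u a ≤ ((m : ℝ) - a) * v := by
  induction m, ham using Nat.le_induction with
  | base => simp
  | succ n han ih =>
    have hn : n < k := hm
    have := ih hn.le fun i hai hin => h i hai (by omega)
    have := h ⟨n, hn⟩ han (by simp)
    rw [psum_succ u hn]
    push_cast
    linarith

lemma le_psum_sub_psum {u : Fin k → ℝ} {a m : ℕ} {v : ℝ} (ham : a ≤ m) (hm : m ≤ k)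
    (h : ∀ i : Fin k, a ≤ (i : ℕ) → (i : ℕ) < m → v ≤ u i) :
    ((m : ℝ) - a) * v ≤ psum u m - psum u a := by
  have := psum_sub_psum_le (u := fun i => -u i) (v := -v) ham hm fun i hai him => by
    simpa using h i hai him
  simp only [psum, sum_neg_distrib] at this ⊢
  linarith

/-- On a block `[a, b)` where `g` is constant, `l ↦ psum (f - g) l` is concave, so it is
nonnegative on `[a, b]` once it is at both ends. -/
lemma psum_le_psum_of_endpoints {f g : Fin k → ℝ} (hf : Antitone f) {a b l : ℕ} {c : ℝ}
    (hb : b ≤ k) (hg : ∀ i : Fin k, a ≤ (i : ℕ) → (i : ℕ) < b → g i = c)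
    (ha : psum g a ≤ psum f a) (hb' : psum g b ≤ psum f b) (hal : a ≤ l) (hlb : l ≤ b) :
    psum g l ≤ psum f l := by
  rcases hlb.eq_or_lt with rfl | hlb
  · exact hb'
  set u : Fin k → ℝ := fun i => f i - g i with hu
  set j : Fin k := ⟨l, hlb.trans_le hb⟩
  have hgj : g j = c := hg j hal hlb
  have hlow : ((l : ℝ) - a) * u j ≤ psum u l - psum u a :=
    le_psum_sub_psum hal (hlb.le.trans hb) fun i hai hil => by
      simp only [hu, hgj, hg i hai (hil.trans hlb)]
      linarith [hf (show i ≤ j from hil.le)]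
  have hupp : psum u b - psum u l ≤ ((b : ℝ) - l) * u j :=
    psum_sub_psum_le hlb.le hb fun i hli hib => by
      simp only [hu, hgj, hg i (hal.trans hli) hib]
      linarith [hf (show j ≤ i from hli)]
  simp only [hu, psum_sub] at hlow hupp
  have hla : (a : ℝ) ≤ l := by exact_mod_cast hal
  have hlb' : (l : ℝ) < b := by exact_mod_cast hlb
  nlinarith

end PartialSums

section Majorization

variable {k : ℕ}

lemma descSort_eq_self {f : Fin k → ℝ} (hf : Antitone f) : descSort f = f := by
  have hmono : Monotone (f ∘ Fin.revPerm) := fun i j hij => hf (by simpa using hij)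
  funext i
  have := congrFun (Tuple.comp_sort_eq_comp_iff_monotone.mpr hmono) i.rev
  simp only [Function.comp_apply, Fin.revPerm_apply, Fin.rev_rev] at this
  exact this.symm

lemma majorizes_iff_of_antitone {a b : Fin k → ℝ} (ha : Antitone a) (hb : Antitone b) :
    Majorizes a b ↔
      (∑ i, a i = ∑ i, b i) ∧ ∀ l : ℕ, 1 ≤ l → l ≤ k → psum b l ≤ psum a l := by
  rw [Majorizes, descSort_eq_self ha, descSort_eq_self hb]

end Majorization

lemma Fin.exists_iff_lt_of_isLowerSet {k : ℕ} (P : Fin k → Prop) [DecidablePred P]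
    (hP : IsLowerSet {i | P i}) : ∃ n ≤ k, ∀ i : Fin k, P i ↔ (i : ℕ) < n := by
  refine ⟨#(univ.filter P), (card_filter_le _ _).trans (by simp),
    fun i => ⟨fun hi => ?_, ?_⟩⟩
  · have : Iic i ⊆ univ.filter P := fun j hj =>
      mem_filter.2 ⟨mem_univ j, hP (mem_Iic.1 hj) hi⟩
    have := card_le_card this
    rw [Fin.card_Iic] at this
    omega
  · contrapose!
    intro hni
    have : univ.filter P ⊆ Iio i := fun j hj =>
      mem_Iio.2 (lt_of_not_ge fun hij => hni (hP hij (mem_filter.1 hj).2))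
    simpa using card_le_card this

section Levels

variable {k : ℕ} (q : Fin k → ℝ)

lemma epsFn_eq_sum_max (x : ℝ) : epsFn q x = ∑ i, max (q i - x) 0 := by
  rw [epsFn, sum_filter]
  refine sum_congr rfl fun i _ => ?_
  split_ifs with h
  · exact (max_eq_left (by linarith)).symm
  · exact (max_eq_right (by linarith)).symm

lemma gammaFn_eq_sum_max (y : ℝ) : gammaFn q y = ∑ i, max (y - q i) 0 := by
  rw [gammaFn, sum_filter]
  refine sum_congr rfl fun i _ => ?_
  split_ifs with h
  · exact (max_eq_left (by linarith)).symm
  · exact (max_eq_right (by linarith)).symm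

lemma epsFn_antitone : Antitone (epsFn q) := fun x x' h => by
  simp only [epsFn_eq_sum_max]
  exact sum_le_sum fun i _ => max_le_max (by linarith) le_rfl

lemma gammaFn_monotone : Monotone (gammaFn q) := fun y y' h => by
  simp only [gammaFn_eq_sum_max]
  exact sum_le_sum fun i _ => max_le_max (by linarith) le_rfl

lemma epsFn_sub_gammaFn (c : ℝ) : epsFn q c - gammaFn q c = ∑ i, q i - k * c := by
  rw [epsFn_eq_sum_max, gammaFn_eq_sum_max, ← sum_sub_distrib]
  have h : ∀ i, max (q i - c) 0 - max (c - q i) 0 = q i - c := fun i => by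
    rcases le_total (q i) c with h | h
    · rw [max_eq_right (by linarith), max_eq_left (by linarith)]; ring
    · rw [max_eq_left (by linarith), max_eq_right (by linarith)]; ring
  simp [h, sum_sub_distrib]

lemma l1dist_const_eq_epsFn_add_gammaFn (c : ℝ) :
    l1dist q (fun _ => c) = epsFn q c + gammaFn q c := by
  rw [l1dist, epsFn_eq_sum_max, gammaFn_eq_sum_max, ← sum_add_distrib]
  refine sum_congr rfl fun i _ => ?_
  rcases le_total (q i) c with h | h
  · rw [abs_of_nonpos (by linarith), max_eq_right (by linarith), max_eq_left (by linarith)]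
    ring
  · rw [abs_of_nonneg (by linarith), max_eq_left (by linarith), max_eq_right (by linarith)]
    ring

lemma psum_sub_epsFn_le (c : ℝ) (l : ℕ) :
    psum q l - epsFn q c ≤ psum (fun i => min (q i) c) l := by
  have hmin : (fun i => min (q i) c) = fun i => q i - max (q i - c) 0 := by
    funext i
    rcases le_total (q i) c with h | h
    · rw [min_eq_left h, max_eq_right (by linarith)]; ring
    · rw [min_eq_right h, max_eq_left (by linarith)]; ring
  rw [hmin, psum_sub, epsFn_eq_sum_max]
  have : psum (fun i => max (q i - c) 0) l ≤ ∑ i, max (q i - c) 0 :=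
    sum_le_sum_of_subset_of_nonneg (subset_univ _) fun i _ _ => le_max_right _ _
  linarith

variable {q}

lemma natCast_ne_zero_of_sum_eq_one (hq : ∑ i, q i = 1) : (k : ℝ) ≠ 0 := by
  rintro h
  obtain rfl : k = 0 := by exact_mod_cast h
  simp at hq

lemma sum_unif (hq : ∑ i, q i = 1) : ∑ i, unif k i = 1 := by
  simp [unif, natCast_ne_zero_of_sum_eq_one hq]

lemma l1dist_unif_eq_two_mul (hq : ∑ i, q i = 1) :
    l1dist q (unif k) = 2 * epsFn q (k : ℝ)⁻¹ ∧
      l1dist q (unif k) = 2 * gammaFn q (k : ℝ)⁻¹ := by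
  have hk := natCast_ne_zero_of_sum_eq_one hq
  have h := epsFn_sub_gammaFn q (k : ℝ)⁻¹
  rw [hq, mul_inv_cancel₀ hk, sub_self, sub_eq_zero] at h
  unfold unif
  rw [l1dist_const_eq_epsFn_add_gammaFn, h]
  constructor <;> ring

end Levels

section Flattest

variable {k : ℕ} {δ x y : ℝ} {p q qflat : Fin k → ℝ}

namespace IsFlattestWith

lemma min_le (h : IsFlattestWith δ q qflat x y) (i : Fin k) : min (q i) x ≤ qflat i := by
  rw [h.2.2.2.2 i]
  split_ifs with hx hy
  · exact min_le_right _ _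
  · exact (min_le_left _ _).trans hy
  · exact min_le_left _ _

lemma antitone (h : IsFlattestWith δ q qflat x y) (hyx : y ≤ x) (hq : Antitone q) :
    Antitone qflat := fun i j hij => by
  rw [h.2.2.2.2 i, h.2.2.2.2 j]
  have := hq hij
  split_ifs <;> linarith

lemma eq_sub_add (h : IsFlattestWith δ q qflat x y) (hyx : y ≤ x) (i : Fin k) :
    qflat i = q i - max (q i - x) 0 + max (y - q i) 0 := by
  rw [h.2.2.2.2 i]
  split_ifs
  · rw [max_eq_left (by linarith), max_eq_right (by linarith)]; ring
  · rw [max_eq_right (by linarith), max_eq_left (by linarith)]; ring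
  · rw [max_eq_right (by linarith), max_eq_right (by linarith)]; ring

lemma sum_eq (h : IsFlattestWith δ q qflat x y) (hyx : y ≤ x) :
    ∑ i, qflat i = ∑ i, q i := by
  simp only [h.eq_sub_add hyx, sum_add_distrib, sum_sub_distrib, ← epsFn_eq_sum_max,
    ← gammaFn_eq_sum_max, h.2.2.1, h.2.2.2.1]
  ring

lemma psum_eq (h : IsFlattestWith δ q qflat x y) (hyx : y ≤ x) {l : ℕ}
    (hx : ∀ i : Fin k, x ≤ q i → (i : ℕ) < l)
    (hy : ∀ i : Fin k, (i : ℕ) < l → y < q i) : psum qflat l = psum q l - δ / 2 := by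
  have hcut : psum (fun i => max (q i - x) 0) l = δ / 2 := by
    rw [← h.2.2.1, epsFn_eq_sum_max, psum]
    refine sum_subset (subset_univ _) fun i _ hi => max_eq_right ?_
    have : ¬ x ≤ q i := fun hxi => hi (by simpa using hx i hxi)
    linarith
  have hfill : psum (fun i => max (y - q i) 0) l = 0 :=
    sum_eq_zero fun i hi => max_eq_right (by linarith [hy i (by simpa using hi)])
  rw [show qflat = _ from funext (h.eq_sub_add hyx), psum_add, psum_sub, hcut, hfill]
  ring

lemma lt_of_lt_l1dist (h : IsFlattestWith δ q qflat x y) (hq : ∑ i, q i = 1)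
    (hlt : δ < l1dist q (unif k)) : y < x := by
  obtain ⟨he, hg⟩ := l1dist_unif_eq_two_mul hq
  have hx : (k : ℝ)⁻¹ < x :=
    lt_of_not_ge fun hxk => by linarith [epsFn_antitone q hxk, h.2.2.1]
  have hy : y < (k : ℝ)⁻¹ :=
    lt_of_not_ge fun hyk => by linarith [gammaFn_monotone q hyk, h.2.2.2.1]
  exact hy.trans hx

lemma psum_le_psum (h : IsFlattestWith δ q qflat x y) (hyx : y < x) (hq : Antitone q)
    (hp : Antitone p) (hsum : ∑ i, qflat i = ∑ i, p i)
    (hpq : ∀ l ≤ k, psum q l - δ / 2 ≤ psum p l)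
    {l : ℕ} (hl : l ≤ k) : psum qflat l ≤ psum p l := by
  obtain ⟨A, hAk, hA⟩ := Fin.exists_iff_lt_of_isLowerSet (fun i => x ≤ q i)
    fun i j hji hi => le_trans hi (hq hji)
  obtain ⟨B, hBk, hB⟩ := Fin.exists_iff_lt_of_isLowerSet (fun i => y < q i)
    fun i j hji hi => lt_of_lt_of_le hi (hq hji)
  have hAB : A ≤ B := by
    by_contra! hBA
    have := (hB ⟨B, hBA.trans_le hAk⟩).1 (hyx.trans_le ((hA _).2 hBA))
    simp at this
  have hmid : ∀ m, A ≤ m → m ≤ B → psum qflat m ≤ psum p m := fun m hAm hmB => by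
    rw [h.psum_eq hyx.le (fun i hi => ((hA i).1 hi).trans_le hAm)
      (fun i hi => (hB i).2 (hi.trans_le hmB))]
    exact hpq m (hmB.trans hBk)
  rcases le_total l A with hlA | hAl
  · refine psum_le_psum_of_endpoints hp hAk (c := x) (fun i _ hi => ?_)
      (by simp [psum_zero]) (hmid A le_rfl hAB) (Nat.zero_le l) hlA
    rw [h.2.2.2.2 i, if_pos ((hA i).2 hi)]
  rcases le_total l B with hlB | hBl
  · exact hmid l hAl hlB
  · refine psum_le_psum_of_endpoints hp le_rfl (c := y) (fun i hi _ => ?_)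
      (hmid B hAB le_rfl) (by rw [psum_self, psum_self, hsum]) hBl hl
    have hqi : q i ≤ y := not_lt.1 fun hyi => by have := (hB i).1 hyi; omega
    rw [h.2.2.2.2 i, if_neg (by linarith), if_pos hqi]

end IsFlattestWith

namespace IsFlattest

lemma antitone (h : IsFlattest δ q qflat) (hq1 : ∑ i, q i = 1) (hq : Antitone q) :
    Antitone qflat := by
  rcases h with ⟨_, rfl⟩ | ⟨hlt, x, y, h⟩
  · exact fun _ _ _ => le_rfl
  · exact h.antitone (h.lt_of_lt_l1dist hq1 hlt).le hq

lemma sum_eq (h : IsFlattest δ q qflat) (hq1 : ∑ i, q i = 1) : ∑ i, qflat i = 1 := by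
  rcases h with ⟨_, rfl⟩ | ⟨hlt, x, y, h⟩
  · exact sum_unif hq1
  · rw [h.sum_eq (h.lt_of_lt_l1dist hq1 hlt).le, hq1]

lemma psum_sub_half_le (h : IsFlattest δ q qflat) (hq1 : ∑ i, q i = 1) (l : ℕ) :
    psum q l - δ / 2 ≤ psum qflat l := by
  rcases h with ⟨hle, rfl⟩ | ⟨hlt, x, y, h⟩
  · have : psum (fun i => min (q i) (k : ℝ)⁻¹) l ≤ psum (unif k) l :=
      psum_le_psum (fun i => min_le_right _ _) l
    linarith [psum_sub_epsFn_le q (k : ℝ)⁻¹ l, (l1dist_unif_eq_two_mul hq1).1]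
  · linarith [psum_sub_epsFn_le q x l, psum_le_psum h.min_le l, h.2.2.1]

lemma psum_le_psum (h : IsFlattest δ q qflat) (hq1 : ∑ i, q i = 1) (hq : Antitone q)
    (hp1 : ∑ i, p i = 1) (hp : Antitone p)
    (hpq : ∀ l ≤ k, psum q l - δ / 2 ≤ psum p l) {l : ℕ} (hl : l ≤ k) :
    psum qflat l ≤ psum p l := by
  rcases h with ⟨_, rfl⟩ | ⟨hlt, x, y, h⟩
  · refine psum_le_psum_of_endpoints hp le_rfl (a := 0) (c := (k : ℝ)⁻¹) (fun _ _ _ => rfl)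
      (by simp [psum_zero]) ?_ (Nat.zero_le l) hl
    rw [psum_self, psum_self, sum_unif hq1, hp1]
  · have hyx := h.lt_of_lt_l1dist hq1 hlt
    exact h.psum_le_psum hyx hq hp (by rw [h.sum_eq hyx.le, hq1, hp1]) hpq hl

end IsFlattest

end Flattest

theorem min_delta_flattest_general {k : ℕ}
    (p q : Fin k → ℝ) (hp : IsProbDist p) (hq : IsProbDist q)
    (hpord : Antitone p) (hqord : Antitone q)
    (δstar : ℝ)
    (hub : ∀ l : ℕ, 1 ≤ l → l ≤ k → 2 * (psum q l - psum p l) ≤ δstar)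
    (hmem : ∃ l : ℕ, 1 ≤ l ∧ l ≤ k ∧ δstar = 2 * (psum q l - psum p l)) :
    (∀ qflat : Fin k → ℝ, IsFlattest δstar q qflat → Majorizes p qflat) ∧
    (∀ δ : ℝ, 0 ≤ δ → δ < δstar →
      ∀ qflat : Fin k → ℝ, IsFlattest δ q qflat → ¬ Majorizes p qflat) := by
  obtain ⟨l₀, hl₀, hl₀k, hδstar⟩ := hmem
  have hpq : ∀ l ≤ k, psum q l - δstar / 2 ≤ psum p l := by
    intro l hl
    rcases Nat.eq_zero_or_pos l with rfl | hl1
    · have := hub k (hl₀.trans hl₀k) le_rfl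
      rw [psum_self, psum_self, hp.2, hq.2] at this
      simp only [psum_zero]
      linarith
    · linarith [hub l hl1 hl]
  refine ⟨fun qflat hflat => ?_, fun δ _ hδ qflat hflat hmaj => ?_⟩
  · rw [majorizes_iff_of_antitone hpord (hflat.antitone hq.2 hqord)]
    exact ⟨by rw [hp.2, hflat.sum_eq hq.2],
      fun l _ hl => hflat.psum_le_psum hq.2 hqord hp.2 hpord hpq hl⟩
  · have := ((majorizes_iff_of_antitone hpord (hflat.antitone hq.2 hqord)).1 hmaj).2 l₀ hl₀ hl₀k
    linarith [hflat.psum_sub_half_le hq.2 l₀]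

/-- if `p ⊁ q` then `δ* = 2 max_{1 ≤ l ≤ k} Σ_{i=1}^l (qᵢ − pᵢ)` is the
minimal `δ` such that `p` majorizes the flattest `δ`-approximation of `q`. -/
theorem min_delta_flattest {k : ℕ}
    (p q : Fin k → ℝ) (hp : IsProbDist p) (hq : IsProbDist q)
    (hpord : Antitone p) (hqord : Antitone q) (hnmaj : ¬ Majorizes p q)
    (δstar : ℝ)
    (hub : ∀ l : ℕ, 1 ≤ l → l ≤ k → 2 * (psum q l - psum p l) ≤ δstar)
    (hmem : ∃ l : ℕ, 1 ≤ l ∧ l ≤ k ∧ δstar = 2 * (psum q l - psum p l)) :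
    (∀ qflat : Fin k → ℝ, IsFlattest δstar q qflat → Majorizes p qflat) ∧
    (∀ δ : ℝ, 0 ≤ δ → δ < δstar →
      ∀ qflat : Fin k → ℝ, IsFlattest δ q qflat → ¬ Majorizes p qflat) :=
  min_delta_flattest_general p q hp hq hpord hqord δstar hub hmem
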